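/- Let Φ be a smooth 2π-periodic real-valued function with ∫₀^{2π}Φ = 0, let a ∈ ℝ, and define G(x) = −(2/3)Φ(x)(∫₀^x Φ(r)dr + (1/2π)∫₀^{2π} rΦ(r)dr). Let u : ℝ × [0,∞) → ℝ be smooth and 2π-periodic in x, solving ∂_t u = −u_xxx − a u_x + G u − (1/2π)∫₀^{2π} G(y)u(y,t)dy. Then there exists a constant C, depending only on Φ, such that for all t ≥ 0: ‖u(·,t)‖_{L²(0,2π)} ≤ e^{Ct}‖u(·,0)‖_{L²(0,2π)} and ‖u(·,t)‖_{H¹(0,2π)} ≤ e^{Ct}‖u(·,0)‖_{H¹(0,2π)}. -/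

import Mathlib

noncomputable section
open Real MeasureTheory intervalIntegral Set Metric


-- partial derivative along direction w
def pd (w : ℝ × ℝ) (f : ℝ × ℝ → ℝ) : ℝ × ℝ → ℝ := fun p => fderiv ℝ f p w

lemma pd_contDiff {f : ℝ × ℝ → ℝ} (hf : ContDiff ℝ (⊤ : ℕ∞) f) (w : ℝ × ℝ) :
    ContDiff ℝ (⊤ : ℕ∞) (pd w f) := by
  exact (hf.fderiv_right (m := (⊤ : ℕ∞)) (by simp)).clm_apply contDiff_const

lemma hasDerivAt_slice_x {f : ℝ × ℝ → ℝ} (hf : ContDiff ℝ (⊤ : ℕ∞) f) (x t : ℝ) :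
    HasDerivAt (fun y => f (y, t)) (pd (1, 0) f (x, t)) x := by
  have h1 : HasFDerivAt f (fderiv ℝ f (x, t)) (x, t) :=
    (hf.differentiable (by simp) (x, t)).hasFDerivAt
  have h2 : HasDerivAt (fun y : ℝ => (y, t)) ((1 : ℝ), (0 : ℝ)) x :=
    (hasDerivAt_id x).prodMk (hasDerivAt_const x t)
  exact h1.comp_hasDerivAt x h2

lemma hasDerivAt_slice_t {f : ℝ × ℝ → ℝ} (hf : ContDiff ℝ (⊤ : ℕ∞) f) (x t : ℝ) :
    HasDerivAt (fun τ => f (x, τ)) (pd (0, 1) f (x, t)) t := by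
  have h1 : HasFDerivAt f (fderiv ℝ f (x, t)) (x, t) :=
    (hf.differentiable (by simp) (x, t)).hasFDerivAt
  have h2 : HasDerivAt (fun τ : ℝ => (x, τ)) ((0 : ℝ), (1 : ℝ)) t :=
    (hasDerivAt_const t x).prodMk (hasDerivAt_id t)
  exact h1.comp_hasDerivAt t h2

lemma deriv_slice_x {f : ℝ × ℝ → ℝ} (hf : ContDiff ℝ (⊤ : ℕ∞) f) (x t : ℝ) :
    deriv (fun y => f (y, t)) x = pd (1, 0) f (x, t) :=
  (hasDerivAt_slice_x hf x t).deriv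

-- Clairaut
lemma pd_swap {f : ℝ × ℝ → ℝ} (hf : ContDiff ℝ (⊤ : ℕ∞) f) (v w : ℝ × ℝ) (p : ℝ × ℝ) :
    pd v (pd w f) p = pd w (pd v f) p := by
  have hsymm : IsSymmSndFDerivAt ℝ f p :=
    (hf.contDiffAt).isSymmSndFDerivAt (by rw [minSmoothness_of_isRCLikeNormedField]; exact WithTop.coe_le_coe.mpr (le_top : (2 : ℕ∞) ≤ ⊤))
  have hdf : Differentiable ℝ (fderiv ℝ f) :=
    (hf.fderiv_right (m := (⊤ : ℕ∞)) (by simp)).differentiable (by simp)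
  have key : ∀ a b : ℝ × ℝ,
      fderiv ℝ (fun q => fderiv ℝ f q b) p a = fderiv ℝ (fderiv ℝ f) p a b := by
    intro a b
    have h := fderiv_clm_apply (hdf p) (differentiableAt_const b)
    rw [show (fun q => fderiv ℝ f q b) = fun q => (fderiv ℝ f q) ((fun _ : ℝ × ℝ => b) q) from rfl, h]
    simp
  show fderiv ℝ (fun q => fderiv ℝ f q w) p v = fderiv ℝ (fun q => fderiv ℝ f q v) p w
  rw [key v w, key w v]
  exact hsymm.eq v w
noncomputable section

lemma hasDerivAt_param (F F' : ℝ → ℝ → ℝ)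
    (hFc : Continuous fun p : ℝ × ℝ => F p.1 p.2)
    (hF'c : Continuous fun p : ℝ × ℝ => F' p.1 p.2)
    (hd : ∀ x t, HasDerivAt (fun τ => F x τ) (F' x t) t) (t₀ : ℝ) :
    HasDerivAt (fun t => ∫ x in (0:ℝ)..(2 * Real.pi), F x t)
      (∫ x in (0:ℝ)..(2 * Real.pi), F' x t₀) t₀ := by
  have hK : IsCompact ((Set.uIcc (0:ℝ) (2 * Real.pi)) ×ˢ (closedBall t₀ 1)) :=
    isCompact_uIcc.prod (isCompact_closedBall _ _)
  obtain ⟨M, hM⟩ := hK.exists_bound_of_continuousOn hF'c.continuousOn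
  have cont_slice : ∀ t, Continuous fun x => F x t := fun t =>
    hFc.comp (continuous_id.prodMk continuous_const)
  have cont_slice' : ∀ t, Continuous fun x => F' x t := fun t =>
    hF'c.comp (continuous_id.prodMk continuous_const)
  have := (intervalIntegral.hasDerivAt_integral_of_dominated_loc_of_deriv_le
    (F := fun t x => F x t) (F' := fun t x => F' x t) (x₀ := t₀)
    (a := (0:ℝ)) (b := 2 * Real.pi) (μ := volume) (bound := fun _ => M)
    (s := ball t₀ 1) (ball_mem_nhds t₀ one_pos)
    (Filter.Eventually.of_forall fun t => (cont_slice t).aestronglyMeasurable)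
    ((cont_slice t₀).intervalIntegrable _ _)
    ((cont_slice' t₀).aestronglyMeasurable)
    ?_ (intervalIntegrable_const) ?_)
  · exact this.2
  · refine Filter.Eventually.of_forall fun x hx t ht => ?_
    exact hM (x, t) ⟨uIoc_subset_uIcc hx, ball_subset_closedBall ht⟩
  · exact Filter.Eventually.of_forall fun x _ t _ => hd x t

lemma integral_deriv_periodic_zero (f f' : ℝ → ℝ)
    (h : ∀ x ∈ Set.uIcc (0:ℝ) (2 * Real.pi), HasDerivAt f (f' x) x)
    (hint : IntervalIntegrable f' volume 0 (2 * Real.pi))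
    (hper : f (2 * Real.pi) = f 0) :
    (∫ x in (0:ℝ)..(2 * Real.pi), f' x) = 0 := by
  rw [intervalIntegral.integral_eq_sub_of_hasDerivAt h hint, hper, sub_self]

lemma cs_integral (f g : ℝ → ℝ) (hf : Continuous f) (hg : Continuous g) :
    (∫ x in (0:ℝ)..(2 * Real.pi), f x * g x) ^ 2 ≤
      (∫ x in (0:ℝ)..(2 * Real.pi), f x ^ 2) * (∫ x in (0:ℝ)..(2 * Real.pi), g x ^ 2) := by
  set A := ∫ x in (0:ℝ)..(2 * Real.pi), f x ^ 2 with hA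
  set B := ∫ x in (0:ℝ)..(2 * Real.pi), f x * g x with hB
  set Cq := ∫ x in (0:ℝ)..(2 * Real.pi), g x ^ 2 with hC
  have hpi : (0:ℝ) ≤ 2 * Real.pi := by positivity
  have key : ∀ l : ℝ, 0 ≤ A + 2 * l * B + l ^ 2 * Cq := by
    intro l
    have h0 : 0 ≤ ∫ x in (0:ℝ)..(2 * Real.pi), (f x + l * g x) ^ 2 :=
      intervalIntegral.integral_nonneg hpi fun x _ => sq_nonneg _
    have hexp : (∫ x in (0:ℝ)..(2 * Real.pi), (f x + l * g x) ^ 2)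
        = A + 2 * l * B + l ^ 2 * Cq := by
      have h1 : (fun x => (f x + l * g x) ^ 2)
          = fun x => f x ^ 2 + ((2 * l) * (f x * g x) + l ^ 2 * g x ^ 2) := by
        funext x; ring
      rw [h1, intervalIntegral.integral_add (f := fun x => f x ^ 2)
          (g := fun x => 2 * l * (f x * g x) + l ^ 2 * g x ^ 2) ((hf.pow 2).intervalIntegrable _ _)
          (((continuous_const.mul (hf.mul hg)).add (continuous_const.mul (hg.pow 2))).intervalIntegrable _ _),
        intervalIntegral.integral_add (f := fun x => 2 * l * (f x * g x))
          (g := fun x => l ^ 2 * g x ^ 2) ((continuous_const.mul (hf.mul hg)).intervalIntegrable _ _)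
          ((continuous_const.mul (hg.pow 2)).intervalIntegrable _ _),
        intervalIntegral.integral_const_mul, intervalIntegral.integral_const_mul]
      ring
    linarith [hexp ▸ h0]
  have hCnn : 0 ≤ Cq := intervalIntegral.integral_nonneg hpi fun x _ => sq_nonneg _
  have hAnn : 0 ≤ A := intervalIntegral.integral_nonneg hpi fun x _ => sq_nonneg _
  rcases eq_or_lt_of_le hCnn with hC0 | hCpos
  · have hB0 : B = 0 := by
      by_contra hB0
      have h1 := key (-(A + 1) / (2 * B))
      rw [← hC0] at h1
      have h2 : 2 * (-(A + 1) / (2 * B)) * B = -(A + 1) := by field_simp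
      rw [h2] at h1; simp at h1; linarith
    rw [hB0, ← hC0]; simp
  · have h1 := key (-(B / Cq))
    have h2 : A + 2 * (-(B / Cq)) * B + (-(B / Cq)) ^ 2 * Cq = A - B ^ 2 / Cq := by
      field_simp; ring
    rw [h2] at h1
    have := (div_le_iff₀ hCpos).mp (by linarith : B ^ 2 / Cq ≤ A)
    linarith

lemma gronwall_aux (E E' : ℝ → ℝ) (K : ℝ) (hd : ∀ t, HasDerivAt E (E' t) t)
    (hle : ∀ t, 0 ≤ t → E' t ≤ 2 * K * E t) (t : ℝ) (ht : 0 ≤ t) :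
    E t ≤ Real.exp (2 * K * t) * E 0 := by
  set g := fun s => E s * Real.exp (-(2 * K) * s) with hgdef
  have hg : ∀ s, HasDerivAt g ((E' s - 2 * K * E s) * Real.exp (-(2 * K) * s)) s := by
    intro s
    have he : HasDerivAt (fun s : ℝ => Real.exp (-(2 * K) * s))
        (Real.exp (-(2 * K) * s) * (-(2 * K))) s := by
      simpa using ((hasDerivAt_id s).const_mul (-(2 * K))).exp
    have := (hd s).mul he
    exact this.congr_deriv (by ring)
  have mono : AntitoneOn g (Set.Ici 0) := by
    apply antitoneOn_of_deriv_nonpos (convex_Ici 0)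
    · have hEc : Continuous E := Differentiable.continuous (fun s => (hd s).differentiableAt)
      exact (hEc.mul (by fun_prop)).continuousOn
    · intro s _; exact (hg s).differentiableAt.differentiableWithinAt
    · intro s hs
      rw [interior_Ici] at hs
      rw [(hg s).deriv]
      have h1 : E' s - 2 * K * E s ≤ 0 := by linarith [hle s (le_of_lt hs)]
      exact mul_nonpos_of_nonpos_of_nonneg h1 (Real.exp_nonneg _)
  have h1 : g t ≤ g 0 := mono (Set.self_mem_Ici) ht ht
  have h2 : g 0 = E 0 := by simp [hgdef]
  have h3 : 0 < Real.exp (-(2 * K) * t) := Real.exp_pos _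
  rw [h2] at h1
  have h4 : E t = g t * Real.exp (2 * K * t) := by
    simp only [hgdef, mul_assoc, ← Real.exp_add]
    ring_nf
    simp
  rw [h4, mul_comm (Real.exp (2 * K * t)) (E 0)]
  exact mul_le_mul_of_nonneg_right h1 (Real.exp_nonneg _)

lemma periodic_deriv_ (f : ℝ → ℝ) (hf : ∀ x, f (x + 2 * Real.pi) = f x) (x : ℝ) :
    deriv f (x + 2 * Real.pi) = deriv f x := by
  have h : (fun y => f (y + 2 * Real.pi)) = f := funext hf
  rw [← deriv_comp_add_const, h]

/-- `G(x) = -(2/3)Φ(x)(∫₀ˣ Φ + (1/2π)∫₀^{2π} rΦ(r)dr)`. -/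
def Gfun (Φ : ℝ → ℝ) (x : ℝ) : ℝ :=
  -(2 / 3) * Φ x *
    ((∫ r in (0:ℝ)..x, Φ r) + (1 / (2 * Real.pi)) * ∫ r in (0:ℝ)..(2 * Real.pi), r * Φ r)

theorem modified_linear_flow_energy_estimates
    (Φ : ℝ → ℝ)
    (hΦsmooth : ContDiff ℝ (⊤ : ℕ∞) Φ)
    (hΦper : ∀ x, Φ (x + 2 * Real.pi) = Φ x)
    (hΦmean : (∫ x in (0:ℝ)..(2 * Real.pi), Φ x) = 0) :
    ∃ C : ℝ, ∀ (a : ℝ) (u : ℝ → ℝ → ℝ),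
      ContDiff ℝ (⊤ : ℕ∞) (fun p : ℝ × ℝ => u p.1 p.2) →
      (∀ x t, u (x + 2 * Real.pi) t = u x t) →
      (∀ x t, 0 ≤ t →
        deriv (fun τ => u x τ) t =
          -iteratedDeriv 3 (fun y => u y t) x - a * deriv (fun y => u y t) x +
            Gfun Φ x * u x t -
            (1 / (2 * Real.pi)) * ∫ y in (0:ℝ)..(2 * Real.pi), Gfun Φ y * u y t) →
      ∀ t : ℝ, 0 ≤ t →
        Real.sqrt (∫ x in (0:ℝ)..(2 * Real.pi), (u x t) ^ 2) ≤
          Real.exp (C * t) * Real.sqrt (∫ x in (0:ℝ)..(2 * Real.pi), (u x 0) ^ 2) ∧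
        Real.sqrt (∫ x in (0:ℝ)..(2 * Real.pi),
            ((u x t) ^ 2 + (deriv (fun y => u y t) x) ^ 2)) ≤
          Real.exp (C * t) * Real.sqrt (∫ x in (0:ℝ)..(2 * Real.pi),
            ((u x 0) ^ 2 + (deriv (fun y => u y 0) x) ^ 2)) := by
  classical
  have hpi : (0:ℝ) < 2 * Real.pi := by positivity
  -- smoothness of G
  have hΦi : ContDiff ℝ (⊤ : ℕ∞) Φ := hΦsmooth.of_le (by simp)
  have hI : ContDiff ℝ (⊤ : ℕ∞) (fun x : ℝ => ∫ r in (0:ℝ)..x, Φ r) := by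
    have hd : ∀ x : ℝ, HasDerivAt (fun x : ℝ => ∫ r in (0:ℝ)..x, Φ r) (Φ x) x := by
      intro x
      exact intervalIntegral.integral_hasDerivAt_right
        ((hΦsmooth.continuous).intervalIntegrable _ _)
        ((hΦsmooth.continuous).stronglyMeasurableAtFilter _ _)
        (hΦsmooth.continuous).continuousAt
    rw [contDiff_infty_iff_deriv]
    constructor
    · exact fun x => (hd x).differentiableAt
    · have h : deriv (fun x : ℝ => ∫ r in (0:ℝ)..x, Φ r) = Φ := funext fun x => (hd x).deriv
      rw [h]; exact hΦi
  have hGsmooth : ContDiff ℝ (⊤ : ℕ∞) (Gfun Φ) :=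
    (contDiff_const.mul hΦi).mul (hI.add contDiff_const)
  set G := Gfun Φ with hGdef
  have hGc : Continuous G := hGsmooth.continuous
  set G' := deriv G with hG'def
  have hG'c : Continuous G' := ((contDiff_infty_iff_deriv.mp hGsmooth).2).continuous
  have hGd : ∀ x, HasDerivAt G (G' x) x := fun x =>
    ((hGsmooth.differentiable (by simp)) x).hasDerivAt
  -- bounds on G, G'
  obtain ⟨M0, hM0⟩ := (isCompact_uIcc (a := (0:ℝ)) (b := 2 * Real.pi)).exists_bound_of_continuousOn
    hGc.continuousOn
  obtain ⟨M1, hM1⟩ := (isCompact_uIcc (a := (0:ℝ)) (b := 2 * Real.pi)).exists_bound_of_continuousOn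
    hG'c.continuousOn
  set M := max M0 0 with hMdef
  set M' := max M1 0 with hM'def
  have hM : 0 ≤ M := le_max_right _ _
  have hM' : 0 ≤ M' := le_max_right _ _
  have hGb : ∀ x ∈ Set.Icc (0:ℝ) (2 * Real.pi), |G x| ≤ M := by
    intro x hx
    exact le_trans (hM0 x (by rwa [Set.uIcc_of_le hpi.le])) (le_max_left _ _)
  have hG'b : ∀ x ∈ Set.Icc (0:ℝ) (2 * Real.pi), |G' x| ≤ M' := by
    intro x hx
    exact le_trans (hM1 x (by rwa [Set.uIcc_of_le hpi.le])) (le_max_left _ _)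
  set C := 2 * M + M' with hCdef
  refine ⟨C, ?_⟩
  intro a u hu hper hpde
  -- joint functions
  set U : ℝ × ℝ → ℝ := fun p => u p.1 p.2 with hUdef
  have hU0 : ContDiff ℝ (⊤ : ℕ∞) U := hu
  set U1 := pd (1, 0) U with hU1def
  set U2 := pd (1, 0) U1 with hU2def
  set U3 := pd (1, 0) U2 with hU3def
  set U4 := pd (1, 0) U3 with hU4def
  set W := pd (0, 1) U with hWdef
  set W1 := pd (0, 1) U1 with hW1def
  have hU1s : ContDiff ℝ (⊤ : ℕ∞) U1 := pd_contDiff hU0 _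
  have hU2s : ContDiff ℝ (⊤ : ℕ∞) U2 := pd_contDiff hU1s _
  have hU3s : ContDiff ℝ (⊤ : ℕ∞) U3 := pd_contDiff hU2s _
  have hU4s : ContDiff ℝ (⊤ : ℕ∞) U4 := pd_contDiff hU3s _
  have hWs : ContDiff ℝ (⊤ : ℕ∞) W := pd_contDiff hU0 _
  have hW1s : ContDiff ℝ (⊤ : ℕ∞) W1 := pd_contDiff hU1s _
  -- slice derivative identities
  have hux : ∀ x t, deriv (fun y => u y t) x = U1 (x, t) := fun x t =>
    (hasDerivAt_slice_x hU0 x t).deriv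
  have hU1x : ∀ x t, deriv (fun y => U1 (y, t)) x = U2 (x, t) := fun x t =>
    (hasDerivAt_slice_x hU1s x t).deriv
  have hU2x : ∀ x t, deriv (fun y => U2 (y, t)) x = U3 (x, t) := fun x t =>
    (hasDerivAt_slice_x hU2s x t).deriv
  have hut : ∀ x t, deriv (fun τ => u x τ) t = W (x, t) := fun x t =>
    (hasDerivAt_slice_t hU0 x t).deriv
  have h3 : ∀ x t, iteratedDeriv 3 (fun y => u y t) x = U3 (x, t) := by
    intro x t
    have e1 : deriv (fun y => u y t) = fun y => U1 (y, t) := funext fun y => hux y t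
    have e2 : deriv (fun y => U1 (y, t)) = fun y => U2 (y, t) := funext fun y => hU1x y t
    have : iteratedDeriv 3 (fun y => u y t) = deriv (deriv (deriv (fun y => u y t))) := by
      simp [iteratedDeriv_succ, iteratedDeriv_zero]
    rw [this, e1, e2, hU2x]
  -- PDE in terms of joint functions
  have hpdeU : ∀ x t, 0 ≤ t → W (x, t) =
      -U3 (x, t) - a * U1 (x, t) + G x * u x t -
        (1 / (2 * Real.pi)) * ∫ y in (0:ℝ)..(2 * Real.pi), G y * u y t := by
    intro x t ht
    rw [← hut x t, hpde x t ht, h3 x t, hux x t]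
  -- periodicity of slices
  have hperU1 : ∀ x t, U1 (x + 2 * Real.pi, t) = U1 (x, t) := by
    intro x t
    rw [← hux, ← hux]
    exact periodic_deriv_ _ (fun y => hper y t) x
  have hperU2 : ∀ x t, U2 (x + 2 * Real.pi, t) = U2 (x, t) := by
    intro x t
    rw [← hU1x, ← hU1x]
    exact periodic_deriv_ _ (fun y => hperU1 y t) x
  have hperU3 : ∀ x t, U3 (x + 2 * Real.pi, t) = U3 (x, t) := by
    intro x t
    rw [← hU2x, ← hU2x]
    exact periodic_deriv_ _ (fun y => hperU2 y t) x
  -- continuity facts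
  have hUc : Continuous U := hU0.continuous
  have hU1c : Continuous U1 := hU1s.continuous
  have hU2c : Continuous U2 := hU2s.continuous
  have hU3c : Continuous U3 := hU3s.continuous
  have hU4c : Continuous U4 := hU4s.continuous
  have hWc : Continuous W := hWs.continuous
  have hW1c : Continuous W1 := hW1s.continuous
  have csl : ∀ (f : ℝ × ℝ → ℝ), Continuous f → ∀ t, Continuous fun x => f (x, t) :=
    fun f hf t => hf.comp (continuous_id.prodMk continuous_const)
  -- energies
  set E : ℝ → ℝ := fun t => ∫ x in (0:ℝ)..(2 * Real.pi), (u x t) ^ 2 with hEdef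
  set Fv : ℝ → ℝ := fun t => ∫ x in (0:ℝ)..(2 * Real.pi), (U1 (x, t)) ^ 2 with hFvdef
  set Ed : ℝ → ℝ := fun t => ∫ x in (0:ℝ)..(2 * Real.pi), 2 * u x t * W (x, t) with hEddef
  set Fd : ℝ → ℝ := fun t => ∫ x in (0:ℝ)..(2 * Real.pi), 2 * U1 (x, t) * W1 (x, t) with hFddef
  have hE : ∀ t, HasDerivAt E (Ed t) t := by
    intro t
    apply hasDerivAt_param (fun x t => (u x t) ^ 2) (fun x t => 2 * u x t * W (x, t))
    · exact hUc.pow 2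
    · exact (continuous_const.mul hUc).mul hWc
    · intro x s
      have h := (hasDerivAt_slice_t hU0 x s).pow 2
      refine h.congr_deriv ?_
      push_cast
      ring
  have hF : ∀ t, HasDerivAt Fv (Fd t) t := by
    intro t
    apply hasDerivAt_param (fun x t => (U1 (x, t)) ^ 2) (fun x t => 2 * U1 (x, t) * W1 (x, t))
    · exact hU1c.pow 2
    · exact (continuous_const.mul hU1c).mul hW1c
    · intro x s
      have h := (hasDerivAt_slice_t hU1s x s).pow 2
      refine h.congr_deriv ?_
      push_cast
      ring
  have hEnn : ∀ t, 0 ≤ E t := fun t =>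
    intervalIntegral.integral_nonneg hpi.le fun x _ => sq_nonneg _
  have hFnn : ∀ t, 0 ≤ Fv t := fun t =>
    intervalIntegral.integral_nonneg hpi.le fun x _ => sq_nonneg _
  -- estimates
  have hEd4 : ∀ t, 0 ≤ t → Ed t ≤ 4 * M * E t := by
    intro t ht
    set Pg := ∫ y in (0:ℝ)..(2 * Real.pi), G y * u y t with hPgdef
    have cu : Continuous fun x => u x t := csl U hUc t
    have cu1 : Continuous fun x => U1 (x, t) := csl U1 hU1c t
    have cu2 : Continuous fun x => U2 (x, t) := csl U2 hU2c t
    have cu3 : Continuous fun x => U3 (x, t) := csl U3 hU3c t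
    have hsplit : (fun x => 2 * u x t * W (x, t)) = fun x =>
        (-2) * (u x t * U3 (x, t)) + ((-2 * a) * (u x t * U1 (x, t)) +
          (2 * (G x * (u x t) ^ 2) + (-2 * ((1 / (2 * Real.pi)) * Pg)) * u x t)) := by
      funext x; rw [hpdeU x t ht]; ring
    have i1 : IntervalIntegrable (fun x => (-2) * (u x t * U3 (x, t))) volume 0 (2 * Real.pi) :=
      (continuous_const.mul (cu.mul cu3)).intervalIntegrable _ _
    have i2 : IntervalIntegrable (fun x => (-2 * a) * (u x t * U1 (x, t))) volume 0 (2 * Real.pi) :=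
      (continuous_const.mul (cu.mul cu1)).intervalIntegrable _ _
    have i3 : IntervalIntegrable (fun x => 2 * (G x * (u x t) ^ 2)) volume 0 (2 * Real.pi) :=
      (continuous_const.mul (hGc.mul (cu.pow 2))).intervalIntegrable _ _
    have i4 : IntervalIntegrable (fun x => (-2 * ((1 / (2 * Real.pi)) * Pg)) * u x t)
        volume 0 (2 * Real.pi) := (continuous_const.mul cu).intervalIntegrable _ _
    have hEdt : Ed t =
        (-2) * (∫ x in (0:ℝ)..(2 * Real.pi), u x t * U3 (x, t)) +
        ((-2 * a) * (∫ x in (0:ℝ)..(2 * Real.pi), u x t * U1 (x, t)) +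
        (2 * (∫ x in (0:ℝ)..(2 * Real.pi), G x * (u x t) ^ 2) +
        (-2 * ((1 / (2 * Real.pi)) * Pg)) * (∫ x in (0:ℝ)..(2 * Real.pi), u x t))) := by
      have e0 : Ed t = ∫ x in (0:ℝ)..(2 * Real.pi), 2 * u x t * W (x, t) := rfl
      rw [e0, hsplit, intervalIntegral.integral_add i1 ((i2.add (i3.add i4))),
        intervalIntegral.integral_add i2 (i3.add i4), intervalIntegral.integral_add i3 i4,
        intervalIntegral.integral_const_mul, intervalIntegral.integral_const_mul,
        intervalIntegral.integral_const_mul, intervalIntegral.integral_const_mul]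
    have hP1 : (∫ x in (0:ℝ)..(2 * Real.pi), u x t * U3 (x, t)) = 0 := by
      apply integral_deriv_periodic_zero
        (fun y => u y t * U2 (y, t) - (U1 (y, t)) ^ 2 / 2)
        (fun x => u x t * U3 (x, t)) ?_ ((cu.mul cu3).intervalIntegrable _ _) ?_
      · intro y _
        have h1 := (hasDerivAt_slice_x hU0 y t).mul (hasDerivAt_slice_x hU2s y t)
        have h2 := ((hasDerivAt_slice_x hU1s y t).pow 2).div_const 2
        have h := h1.sub h2
        refine h.congr_deriv ?_
        push_cast; ring
      · show u (2 * Real.pi) t * U2 (2 * Real.pi, t) - (U1 (2 * Real.pi, t)) ^ 2 / 2 =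
            u 0 t * U2 (0, t) - (U1 (0, t)) ^ 2 / 2
        rw [show (2 * Real.pi : ℝ) = 0 + 2 * Real.pi by ring, hper 0 t, hperU1 0 t, hperU2 0 t]
    have hP2 : (∫ x in (0:ℝ)..(2 * Real.pi), u x t * U1 (x, t)) = 0 := by
      apply integral_deriv_periodic_zero (fun y => (u y t) ^ 2 / 2)
        (fun x => u x t * U1 (x, t)) ?_ ((cu.mul cu1).intervalIntegrable _ _) ?_
      · intro y _
        have h := ((hasDerivAt_slice_x hU0 y t).pow 2).div_const 2
        refine h.congr_deriv ?_
        push_cast; ring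
      · show (u (2 * Real.pi) t) ^ 2 / 2 = (u 0 t) ^ 2 / 2
        rw [show (2 * Real.pi : ℝ) = 0 + 2 * Real.pi by ring, hper 0 t]
    have hP3 : (∫ x in (0:ℝ)..(2 * Real.pi), G x * (u x t) ^ 2) ≤ M * E t := by
      have h1 : (∫ x in (0:ℝ)..(2 * Real.pi), G x * (u x t) ^ 2) ≤
          ∫ x in (0:ℝ)..(2 * Real.pi), M * (u x t) ^ 2 := by
        apply intervalIntegral.integral_mono_on hpi.le
          ((hGc.mul (cu.pow 2)).intervalIntegrable _ _)
          ((continuous_const.mul (cu.pow 2)).intervalIntegrable _ _)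
        intro x hx
        exact mul_le_mul_of_nonneg_right ((abs_le.mp (hGb x hx)).2) (sq_nonneg _)
      rwa [intervalIntegral.integral_const_mul] at h1
    have hPg2 : Pg ^ 2 ≤ (2 * Real.pi * M ^ 2) * E t := by
      have h1 := cs_integral G (fun x => u x t) hGc cu
      have h2 : (∫ x in (0:ℝ)..(2 * Real.pi), (G x) ^ 2) ≤ 2 * Real.pi * M ^ 2 := by
        have h3 : (∫ x in (0:ℝ)..(2 * Real.pi), (G x) ^ 2) ≤
            ∫ _x in (0:ℝ)..(2 * Real.pi), M ^ 2 := by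
          apply intervalIntegral.integral_mono_on hpi.le
            ((hGc.pow 2).intervalIntegrable _ _) intervalIntegrable_const
          intro x hx
          exact sq_le_sq' (by linarith [(abs_le.mp (hGb x hx)).1]) ((abs_le.mp (hGb x hx)).2)
        calc (∫ x in (0:ℝ)..(2 * Real.pi), (G x) ^ 2)
            ≤ ∫ _x in (0:ℝ)..(2 * Real.pi), M ^ 2 := h3
          _ = (2 * Real.pi - 0) * M ^ 2 := by
              rw [intervalIntegral.integral_const, smul_eq_mul]
          _ ≤ 2 * Real.pi * M ^ 2 := by ring_nf; exact le_refl _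
      calc Pg ^ 2 ≤ (∫ x in (0:ℝ)..(2 * Real.pi), (G x) ^ 2) *
            (∫ x in (0:ℝ)..(2 * Real.pi), (u x t) ^ 2) := h1
        _ ≤ (2 * Real.pi * M ^ 2) * E t := mul_le_mul_of_nonneg_right h2 (hEnn t)
    have hP42 : (∫ x in (0:ℝ)..(2 * Real.pi), u x t) ^ 2 ≤ (2 * Real.pi) * E t := by
      have h1 := cs_integral (fun _ => (1:ℝ)) (fun x => u x t) continuous_const cu
      have e1 : (∫ x in (0:ℝ)..(2 * Real.pi), (1:ℝ) * u x t) =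
          ∫ x in (0:ℝ)..(2 * Real.pi), u x t := by simp
      have e2 : (∫ _x in (0:ℝ)..(2 * Real.pi), ((1:ℝ)) ^ 2) = 2 * Real.pi := by simp
      rw [e1, e2] at h1
      exact h1
    have habs : |Pg * (∫ x in (0:ℝ)..(2 * Real.pi), u x t)| ≤ 2 * Real.pi * M * E t := by
      have h1 : (Pg * (∫ x in (0:ℝ)..(2 * Real.pi), u x t)) ^ 2 ≤
          (2 * Real.pi * M * E t) ^ 2 := by
        have hmm := mul_le_mul hPg2 hP42 (sq_nonneg _)
          (mul_nonneg (by positivity) (hEnn t))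
        calc (Pg * (∫ x in (0:ℝ)..(2 * Real.pi), u x t)) ^ 2
            = Pg ^ 2 * (∫ x in (0:ℝ)..(2 * Real.pi), u x t) ^ 2 := by ring
          _ ≤ (2 * Real.pi * M ^ 2 * E t) * (2 * Real.pi * E t) := hmm
          _ = (2 * Real.pi * M * E t) ^ 2 := by ring
      have h2 := Real.sqrt_le_sqrt h1
      rwa [Real.sqrt_sq_eq_abs, Real.sqrt_sq
        (mul_nonneg (mul_nonneg (by positivity) hM) (hEnn t))] at h2
    have hterm4 : (-2 * ((1 / (2 * Real.pi)) * Pg)) * (∫ x in (0:ℝ)..(2 * Real.pi), u x t)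
        ≤ 2 * M * E t := by
      set P4 := ∫ x in (0:ℝ)..(2 * Real.pi), u x t
      have e1 : (-2 * ((1 / (2 * Real.pi)) * Pg)) * P4 = (1 / Real.pi) * (-(Pg * P4)) := by
        field_simp
      rw [e1]
      calc (1 / Real.pi) * (-(Pg * P4)) ≤ (1 / Real.pi) * |Pg * P4| :=
            mul_le_mul_of_nonneg_left (neg_le_abs _) (by positivity)
        _ ≤ (1 / Real.pi) * (2 * Real.pi * M * E t) :=
            mul_le_mul_of_nonneg_left habs (by positivity)
        _ = 2 * M * E t := by
            field_simp
    rw [hEdt, hP1, hP2]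
    have := hEnn t
    nlinarith [hP3, hterm4]
  have hW1eq : ∀ x t, 0 ≤ t → W1 (x, t) =
      -U4 (x, t) - a * U2 (x, t) + (G' x * u x t + G x * U1 (x, t)) := by
    intro x t ht
    have h1 : W1 (x, t) = pd (1, 0) W (x, t) := pd_swap hU0 (0, 1) (1, 0) (x, t)
    have h2 : pd (1, 0) W (x, t) = deriv (fun y => W (y, t)) x := (deriv_slice_x hWs x t).symm
    have h3 : (fun y => W (y, t)) = fun y =>
        -U3 (y, t) - a * U1 (y, t) + G y * u y t -
          (1 / (2 * Real.pi)) * ∫ z in (0:ℝ)..(2 * Real.pi), G z * u z t := by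
      funext y; exact hpdeU y t ht
    rw [h1, h2, h3]
    have d3 := hasDerivAt_slice_x hU3s x t
    have d1 := hasDerivAt_slice_x hU1s x t
    have du := hasDerivAt_slice_x hU0 x t
    have dG := hGd x
    have hd := (((d3.neg).sub (d1.const_mul a)).add (dG.mul du)).sub_const
      ((1 / (2 * Real.pi)) * ∫ z in (0:ℝ)..(2 * Real.pi), G z * u z t)
    exact hd.deriv
  have hFdb : ∀ t, 0 ≤ t → Fd t ≤ M' * (E t + Fv t) + 2 * M * Fv t := by
    intro t ht
    have cu : Continuous fun x => u x t := csl U hUc t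
    have cu1 : Continuous fun x => U1 (x, t) := csl U1 hU1c t
    have cu2 : Continuous fun x => U2 (x, t) := csl U2 hU2c t
    have cu3 : Continuous fun x => U3 (x, t) := csl U3 hU3c t
    have cu4 : Continuous fun x => U4 (x, t) := csl U4 hU4c t
    have hsplit : (fun x => 2 * U1 (x, t) * W1 (x, t)) = fun x =>
        (-2) * (U1 (x, t) * U4 (x, t)) + ((-2 * a) * (U1 (x, t) * U2 (x, t)) +
          (2 * (G' x * (u x t * U1 (x, t))) + 2 * (G x * (U1 (x, t)) ^ 2))) := by
      funext x; rw [hW1eq x t ht]; ring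
    have i1 : IntervalIntegrable (fun x => (-2) * (U1 (x, t) * U4 (x, t))) volume 0 (2 * Real.pi) :=
      (continuous_const.mul (cu1.mul cu4)).intervalIntegrable _ _
    have i2 : IntervalIntegrable (fun x => (-2 * a) * (U1 (x, t) * U2 (x, t)))
        volume 0 (2 * Real.pi) := (continuous_const.mul (cu1.mul cu2)).intervalIntegrable _ _
    have i3 : IntervalIntegrable (fun x => 2 * (G' x * (u x t * U1 (x, t))))
        volume 0 (2 * Real.pi) :=
      (continuous_const.mul (hG'c.mul (cu.mul cu1))).intervalIntegrable _ _
    have i4 : IntervalIntegrable (fun x => 2 * (G x * (U1 (x, t)) ^ 2)) volume 0 (2 * Real.pi) :=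
      (continuous_const.mul (hGc.mul (cu1.pow 2))).intervalIntegrable _ _
    have hFdt : Fd t =
        (-2) * (∫ x in (0:ℝ)..(2 * Real.pi), U1 (x, t) * U4 (x, t)) +
        ((-2 * a) * (∫ x in (0:ℝ)..(2 * Real.pi), U1 (x, t) * U2 (x, t)) +
        (2 * (∫ x in (0:ℝ)..(2 * Real.pi), G' x * (u x t * U1 (x, t))) +
        2 * (∫ x in (0:ℝ)..(2 * Real.pi), G x * (U1 (x, t)) ^ 2))) := by
      have e0 : Fd t = ∫ x in (0:ℝ)..(2 * Real.pi), 2 * U1 (x, t) * W1 (x, t) := rfl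
      rw [e0, hsplit, intervalIntegral.integral_add i1 ((i2.add (i3.add i4))),
        intervalIntegral.integral_add i2 (i3.add i4), intervalIntegral.integral_add i3 i4,
        intervalIntegral.integral_const_mul, intervalIntegral.integral_const_mul,
        intervalIntegral.integral_const_mul, intervalIntegral.integral_const_mul]
    have hQ1 : (∫ x in (0:ℝ)..(2 * Real.pi), U1 (x, t) * U4 (x, t)) = 0 := by
      apply integral_deriv_periodic_zero
        (fun y => U1 (y, t) * U3 (y, t) - (U2 (y, t)) ^ 2 / 2)
        (fun x => U1 (x, t) * U4 (x, t)) ?_ ((cu1.mul cu4).intervalIntegrable _ _) ?_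
      · intro y _
        have h1 := (hasDerivAt_slice_x hU1s y t).mul (hasDerivAt_slice_x hU3s y t)
        have h2 := ((hasDerivAt_slice_x hU2s y t).pow 2).div_const 2
        have h := h1.sub h2
        refine h.congr_deriv ?_
        push_cast; ring
      · show U1 (2 * Real.pi, t) * U3 (2 * Real.pi, t) - (U2 (2 * Real.pi, t)) ^ 2 / 2 =
            U1 (0, t) * U3 (0, t) - (U2 (0, t)) ^ 2 / 2
        rw [show (2 * Real.pi : ℝ) = 0 + 2 * Real.pi by ring, hperU1 0 t, hperU2 0 t, hperU3 0 t]
    have hQ2 : (∫ x in (0:ℝ)..(2 * Real.pi), U1 (x, t) * U2 (x, t)) = 0 := by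
      apply integral_deriv_periodic_zero (fun y => (U1 (y, t)) ^ 2 / 2)
        (fun x => U1 (x, t) * U2 (x, t)) ?_ ((cu1.mul cu2).intervalIntegrable _ _) ?_
      · intro y _
        have h := ((hasDerivAt_slice_x hU1s y t).pow 2).div_const 2
        refine h.congr_deriv ?_
        push_cast; ring
      · show (U1 (2 * Real.pi, t)) ^ 2 / 2 = (U1 (0, t)) ^ 2 / 2
        rw [show (2 * Real.pi : ℝ) = 0 + 2 * Real.pi by ring, hperU1 0 t]
    have hR : 2 * (∫ x in (0:ℝ)..(2 * Real.pi), G' x * (u x t * U1 (x, t)))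
        ≤ M' * (E t + Fv t) := by
      rw [← intervalIntegral.integral_const_mul]
      have h1 : (∫ x in (0:ℝ)..(2 * Real.pi), 2 * (G' x * (u x t * U1 (x, t)))) ≤
          ∫ x in (0:ℝ)..(2 * Real.pi), M' * ((u x t) ^ 2 + (U1 (x, t)) ^ 2) := by
        apply intervalIntegral.integral_mono_on (g := fun x => M' * ((u x t) ^ 2 + (U1 (x, t)) ^ 2)) hpi.le i3
          ((continuous_const.mul ((cu.pow 2).add (cu1.pow 2))).intervalIntegrable _ _)
        intro x hx
        obtain ⟨hl, hr⟩ := abs_le.mp (hG'b x hx)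
        nlinarith [mul_nonneg (sub_nonneg.2 hr) (sq_nonneg (u x t + U1 (x, t))),
          mul_nonneg (sub_nonneg.2 (neg_le.mp hl)) (sq_nonneg (u x t - U1 (x, t)))]
      have e : (∫ x in (0:ℝ)..(2 * Real.pi), M' * ((u x t) ^ 2 + (U1 (x, t)) ^ 2))
          = M' * (E t + Fv t) := by
        rw [intervalIntegral.integral_const_mul,
          intervalIntegral.integral_add (f := fun x => u x t ^ 2) (g := fun x => U1 (x, t) ^ 2) ((cu.pow 2).intervalIntegrable _ _)
            ((cu1.pow 2).intervalIntegrable _ _)]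
      exact h1.trans e.le
    have hS : (∫ x in (0:ℝ)..(2 * Real.pi), G x * (U1 (x, t)) ^ 2) ≤ M * Fv t := by
      have h1 : (∫ x in (0:ℝ)..(2 * Real.pi), G x * (U1 (x, t)) ^ 2) ≤
          ∫ x in (0:ℝ)..(2 * Real.pi), M * (U1 (x, t)) ^ 2 := by
        apply intervalIntegral.integral_mono_on hpi.le
          ((hGc.mul (cu1.pow 2)).intervalIntegrable _ _)
          ((continuous_const.mul (cu1.pow 2)).intervalIntegrable _ _)
        intro x hx
        exact mul_le_mul_of_nonneg_right ((abs_le.mp (hGb x hx)).2) (sq_nonneg _)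
      rwa [intervalIntegral.integral_const_mul] at h1
    rw [hFdt, hQ1, hQ2]
    nlinarith [hR, hS]
  have hEd_le : ∀ t, 0 ≤ t → Ed t ≤ 2 * C * E t := by
    intro t ht
    have h1 := hEd4 t ht
    have h2 := mul_nonneg hM' (hEnn t)
    rw [hCdef]
    nlinarith
  have hFd_le : ∀ t, 0 ≤ t → Ed t + Fd t ≤ 2 * C * (E t + Fv t) := by
    intro t ht
    have h1 := hEd4 t ht
    have h2 := hFdb t ht
    have h3 := mul_nonneg hM' (hEnn t)
    have h4 := mul_nonneg hM' (hFnn t)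
    have h5 := mul_nonneg hM (hFnn t)
    have h6 := mul_nonneg hM (hEnn t)
    rw [hCdef]
    nlinarith
  -- Gronwall
  have hEb : ∀ t, 0 ≤ t → E t ≤ Real.exp (2 * C * t) * E 0 :=
    gronwall_aux E Ed C hE hEd_le
  have hE1b : ∀ t, 0 ≤ t → E t + Fv t ≤ Real.exp (2 * C * t) * (E 0 + Fv 0) :=
    gronwall_aux (fun t => E t + Fv t) (fun t => Ed t + Fd t) C
      (fun t => (hE t).add (hF t)) hFd_le
  -- conclude
  have sqrt_step : ∀ s X Y : ℝ, X ≤ Real.exp (2 * C * s) * Y →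
      Real.sqrt X ≤ Real.exp (C * s) * Real.sqrt Y := by
    intro s X Y h
    have h1 : Real.sqrt X ≤ Real.sqrt (Real.exp (2 * C * s) * Y) := Real.sqrt_le_sqrt h
    have e1 : Real.exp (2 * C * s) = Real.exp (C * s) ^ 2 := by
      rw [sq, ← Real.exp_add]; ring_nf
    rwa [e1, Real.sqrt_mul (sq_nonneg _), Real.sqrt_sq (Real.exp_nonneg _)] at h1
  intro t ht
  have hrw : ∀ s, (∫ x in (0:ℝ)..(2 * Real.pi),
      ((u x s) ^ 2 + (deriv (fun y => u y s) x) ^ 2)) = E s + Fv s := by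
    intro s
    have e : (fun x => (u x s) ^ 2 + (deriv (fun y => u y s) x) ^ 2)
        = fun x => (u x s) ^ 2 + (U1 (x, s)) ^ 2 := by
      funext x; rw [hux]
    rw [e, intervalIntegral.integral_add (f := fun x => u x s ^ 2) (g := fun x => U1 (x, s) ^ 2) (((csl U hUc s).pow 2).intervalIntegrable _ _)
      (((csl U1 hU1c s).pow 2).intervalIntegrable _ _)]
  constructor
  · exact sqrt_step t (E t) (E 0) (hEb t ht)
  · rw [hrw t, hrw 0]
    exact sqrt_step t _ _ (hE1b t ht)
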